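/- Let Q⁽¹⁾,…,Q⁽ⁿ⁾ be symmetric tropical Metzler matrices and define the lifted Puiseux matrices by: Q̲⁽ᵏ⁾_ij = −t^{|Q⁽ᵏ⁾_ij|} if Q⁽ᵏ⁾_ij is tropically negative, Q̲⁽ᵏ⁾_ij = m·n·t^{Q⁽ᵏ⁾_ij} if tropically positive, and 0 if −∞. Then for every x in the tropical Metzler spectrahedron S(Q⁽¹⁾,…,Q⁽ⁿ⁾), the monomial lift x̲ with x̲_k = t^{x_k} (and t^{−∞}=0) satisfies, for all i ≠ j: Q̲_ii(x̲) ≥ 0 and Q̲_ii(x̲)·Q̲_jj(x̲) ≥ (m−1)²·(Q̲_ij(x̲))². -/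

import Mathlib

noncomputable section
open scoped Classical

/-- The field of (formal generalized real) Puiseux series, realized as Hahn series
over `ℝ` with exponents in `ℝᵒᵈ`: the support of a series is well-ordered for the
*reversed* order of `ℝ`, so that each nonzero series has a term of greatest real
exponent (its leading term), the exponents being a strictly decreasing (finite or
unbounded) family of reals. -/
abbrev PS : Type := HahnSeries ℝᵒᵈ ℝ

namespace PS

/-- The leading coefficient of a Puiseux series (`0` for the zero series). -/
def lc (x : PS) : ℝ := x.coeff x.order

/-- The valuation of a Puiseux series: its greatest exponent, with `val 0 = ⊥ = -∞`. -/
def val (x : PS) : WithBot ℝ :=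
  if x = 0 then ⊥ else (OrderDual.ofDual x.order : ℝ)

/-- The real-valued valuation (greatest exponent), with junk value `0` at `0`. -/
def valR (x : PS) : ℝ := OrderDual.ofDual x.order

/-- A Puiseux series is nonnegative when its leading coefficient is nonnegative. -/
def Nonneg (x : PS) : Prop := 0 ≤ lc x

/-- A Puiseux series is positive when its leading coefficient is positive. -/
def Pos (x : PS) : Prop := 0 < lc x

/-- The order of the field of Puiseux series: `x ≤ y` iff `y - x` is nonnegative. -/
def le (x y : PS) : Prop := Nonneg (y - x)

/-- The strict order of the field of Puiseux series. -/
def lt (x y : PS) : Prop := Pos (y - x)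

/-- The positive monomial `t^r`. -/
def tpow (r : ℝ) : PS := HahnSeries.single (OrderDual.toDual r) 1

end PS

section Metzler

/- A signed tropical number is encoded by `Option (Bool × ℝ)`: `none` is `-∞`, and
`some (ε, r)` is the signed tropical number of modulus `r`, tropically positive when
`ε = true` and tropically negative when `ε = false`. -/

/-- `e` is a tropically positive entry. -/
def isPos (e : Option (Bool × ℝ)) : Prop := ∃ r : ℝ, e = some (true, r)

/-- `e` is a tropically negative entry. -/
def isNeg (e : Option (Bool × ℝ)) : Prop := ∃ r : ℝ, e = some (false, r)

/-- The modulus of a signed tropical number, in `ℝ ∪ {-∞}`. -/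
def tmod (e : Option (Bool × ℝ)) : WithBot ℝ := e.elim ⊥ (fun p => (p.2 : WithBot ℝ))

/-- The Puiseux lift of a matrix entry: `-t^r` for a tropically negative entry `⊖r`,
`coef * t^r` for a tropically positive entry `r` (where `coef = m·n`), and `0`
for `-∞`. -/
def entLift (coef : ℝ) (e : Option (Bool × ℝ)) : PS :=
  e.elim 0 (fun p =>
    if p.1 then HahnSeries.single (OrderDual.toDual p.2) coef
    else HahnSeries.single (OrderDual.toDual p.2) (-1))

/-- The monomial lift of a tropical point: `t^r` lifts `r`, and `0` lifts `-∞`. -/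
def liftPt (v : WithBot ℝ) : PS := WithBot.recBotCoe 0 (fun r => PS.tpow r) v

variable {m n : ℕ} (Q : Fin n → Fin m → Fin m → Option (Bool × ℝ))

/-- The `(i,j)` entry of the lifted matrix pencil `x̲₁Q̲⁽¹⁾ + ⋯ + x̲_n Q̲⁽ⁿ⁾`
evaluated at the monomial lift `x̲` of the tropical point `x`. -/
def pencil (x : Fin n → WithBot ℝ) (i j : Fin m) : PS :=
  ∑ k, liftPt (x k) * entLift ((m : ℝ) * n) (Q k i j)

/-- `max` over the tropically positive diagonal coefficients `Q⁽ᵏ⁾ᵢᵢ` of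
`Q⁽ᵏ⁾ᵢᵢ + x_k`. -/
def dPlus (x : Fin n → WithBot ℝ) (i : Fin m) : WithBot ℝ :=
  (Finset.univ.filter (fun k => isPos (Q k i i))).sup (fun k => tmod (Q k i i) + x k)

/-- `max` over the tropically negative diagonal coefficients `Q⁽ᵏ⁾ᵢᵢ` of
`|Q⁽ᵏ⁾ᵢᵢ| + x_k`. -/
def dMinus (x : Fin n → WithBot ℝ) (i : Fin m) : WithBot ℝ :=
  (Finset.univ.filter (fun k => isNeg (Q k i i))).sup (fun k => tmod (Q k i i) + x k)

/-- `max_k (|Q⁽ᵏ⁾ᵢⱼ| + x_k)`. -/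
def offAbs (x : Fin n → WithBot ℝ) (i j : Fin m) : WithBot ℝ :=
  Finset.univ.sup (fun k => tmod (Q k i j) + x k)

/-- Membership in the tropical Metzler spectrahedron `S(Q⁽¹⁾, …, Q⁽ⁿ⁾)`. -/
def memTropSpectra (x : Fin n → WithBot ℝ) : Prop :=
  (∀ i, dMinus Q x i ≤ dPlus Q x i) ∧
    ∀ i j : Fin m, i < j → 2 • offAbs Q x i j ≤ dPlus Q x i + dPlus Q x j

end Metzler

/-!
Write `val f ∈ ℝ ∪ {-∞}` for the largest exponent of a Puiseux series. At the monomial lift,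
`val Q̲ᵢᵢ(x̲) ≤ d⁺ᵢ := dPlus Q x i` (the negative diagonal terms are dominated, by membership) and
`val Q̲ᵢⱼ(x̲) ≤ offAbsᵢⱼ`. At the exponent `d⁺ᵢ` the coefficient of `Q̲ᵢᵢ(x̲)` is at least
`mn - (n - 1)`: a maximizing positive term contributes `mn`, every other term at least `-1`.
Off-diagonal terms are `0` or `-t^r`, so every coefficient of `Q̲ᵢⱼ(x̲)` has modulus at most `n`.
Since `2 offAbsᵢⱼ ≤ d⁺ᵢ + d⁺ⱼ`, the coefficient of `Q̲ᵢᵢ(x̲)Q̲ⱼⱼ(x̲) - (m-1)²Q̲ᵢⱼ(x̲)²` at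
`d⁺ᵢ + d⁺ⱼ` is at least `((m-1)n + 1)² - ((m-1)n)² > 0`, and nothing larger occurs.
-/

namespace PS

open OrderDual HahnSeries

@[simp]
lemma val_zero : (0 : PS).val = ⊥ := if_pos rfl

lemma val_eq_bot {f : PS} : f.val = ⊥ ↔ f = 0 := by
  unfold val; split_ifs with h <;> simp [h]

lemma val_of_ne_zero {f : PS} (hf : f ≠ 0) : f.val = (ofDual f.order : ℝ) := if_neg hf

lemma coeff_eq_zero_of_val_lt {f : PS} {E : ℝ} (hE : f.val < E) : f.coeff (toDual E) = 0 := by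
  by_cases hf : f = 0
  · simp [hf]
  rw [val_of_ne_zero hf, WithBot.coe_lt_coe] at hE
  exact coeff_eq_zero_of_lt_order hE

lemma le_val_of_coeff_ne_zero {f : PS} {E : ℝ} (hE : f.coeff (toDual E) ≠ 0) :
    (E : WithBot ℝ) ≤ f.val :=
  not_lt.mp fun h => hE (coeff_eq_zero_of_val_lt h)

lemma val_le_iff {f : PS} {d : WithBot ℝ} :
    f.val ≤ d ↔ ∀ E : ℝ, d < E → f.coeff (toDual E) = 0 := by
  refine ⟨fun h E hE => coeff_eq_zero_of_val_lt (h.trans_lt hE), fun h => ?_⟩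
  by_contra! hd
  by_cases hf : f = 0
  · simp [hf] at hd
  rw [val_of_ne_zero hf] at hd
  exact hf (coeff_order_eq_zero.mp (h _ hd))

lemma lc_eq_of_val_eq {f : PS} {E : ℝ} (h : f.val = E) : f.lc = f.coeff (toDual E) := by
  have hf : f ≠ 0 := fun hf => by simp [hf] at h
  rw [val_of_ne_zero hf, WithBot.coe_eq_coe] at h
  rw [lc, ← h]; rfl

lemma val_mul (f g : PS) : (f * g).val = f.val + g.val := by
  by_cases hf : f = 0
  · simp [hf]
  by_cases hg : g = 0
  · simp [hg]
  rw [val_of_ne_zero hf, val_of_ne_zero hg, val_of_ne_zero (mul_ne_zero hf hg),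
    order_mul_of_ne_zero (by simpa using And.intro hf hg)]
  rfl

lemma val_smul_le (r : ℝ) (f : PS) : (r • f).val ≤ f.val :=
  val_le_iff.mpr fun E hE => by rw [HahnSeries.coeff_smul, coeff_eq_zero_of_val_lt hE, smul_zero]

lemma coeff_mul_of_val_le {f g : PS} {d e : ℝ} (hf : f.val ≤ d) (hg : g.val ≤ e) :
    (f * g).coeff (toDual (d + e)) = f.coeff (toDual d) * g.coeff (toDual e) := by
  obtain rfl | hf0 := eq_or_ne f 0
  · simp
  obtain rfl | hg0 := eq_or_ne g 0
  · simp
  rcases hf.lt_or_eq with hf | hf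
  · rw [coeff_eq_zero_of_val_lt hf, zero_mul, coeff_eq_zero_of_val_lt]
    rw [val_mul, WithBot.coe_add]
    exact WithBot.add_lt_add_of_lt_of_le (val_eq_bot.not.mpr hg0) hf hg
  rcases hg.lt_or_eq with hg | hg
  · rw [coeff_eq_zero_of_val_lt hg, mul_zero, coeff_eq_zero_of_val_lt]
    rw [val_mul, WithBot.coe_add]
    exact WithBot.add_lt_add_of_le_of_lt (val_eq_bot.not.mpr hf0) hf.le hg
  have hfg : (f * g).val = (d + e : ℝ) := by rw [val_mul, hf, hg]; rfl
  rw [← lc_eq_of_val_eq hf, ← lc_eq_of_val_eq hg, ← lc_eq_of_val_eq hfg]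
  simp only [lc, ← leadingCoeff_eq]
  exact leadingCoeff_mul _ _

lemma nonneg_of_val_le {f : PS} {d : WithBot ℝ} (hf : f.val ≤ d)
    (hd : ∀ r : ℝ, d = r → 0 < f.coeff (toDual r)) : f.Nonneg := by
  induction d using WithBot.recBotCoe with
  | bot => simp [Nonneg, lc, val_eq_bot.mp (le_bot_iff.mp hf)]
  | coe r =>
    have hr := hd r rfl
    rw [Nonneg, lc_eq_of_val_eq (hf.antisymm (le_val_of_coeff_ne_zero hr.ne'))]
    exact hr.le

lemma val_sub_le (f g : PS) : (f - g).val ≤ max f.val g.val :=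
  val_le_iff.mpr fun E hE => by
    rw [coeff_sub, coeff_eq_zero_of_val_lt ((le_max_left _ _).trans_lt hE),
      coeff_eq_zero_of_val_lt ((le_max_right _ _).trans_lt hE), sub_zero]

lemma sq_le_mul_of_val_le {a b h : PS} {da db o : WithBot ℝ} {K : ℝ}
    (ha : a.val ≤ da) (hb : b.val ≤ db) (hh : h.val ≤ o) (ho : 2 • o ≤ da + db)
    (ha' : ∀ d : ℝ, da = d → K + 1 ≤ a.coeff (toDual d))
    (hb' : ∀ d : ℝ, db = d → K + 1 ≤ b.coeff (toDual d))
    (hh' : ∀ E, |h.coeff E| ≤ K) : PS.le (h ^ 2) (a * b) := by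
  refine nonneg_of_val_le (d := da + db) ((val_sub_le _ _).trans (max_le ?_ ?_)) ?_
  · rw [val_mul]; exact add_le_add ha hb
  · rw [sq, val_mul, ← two_nsmul]; exact (nsmul_le_nsmul_right hh 2).trans ho
  rintro r hr
  obtain ⟨d, e, rfl, rfl, rfl⟩ := WithBot.add_eq_coe.mp hr
  have hh2 : h.val ≤ ((d + e) / 2 : ℝ) := by
    refine hh.trans ?_
    induction o using WithBot.recBotCoe with
    | bot => exact bot_le
    | coe s =>
      have : 2 • s ≤ d + e := by exact_mod_cast ho
      rw [two_nsmul] at this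
      exact_mod_cast (by linarith : s ≤ (d + e) / 2)
  have hsq := coeff_mul_of_val_le hh2 hh2
  rw [add_halves] at hsq
  rw [coeff_sub, coeff_mul_of_val_le ha hb, sq, hsq]
  have hK := hh' (toDual ((d + e) / 2))
  nlinarith [ha' d rfl, hb' e rfl, abs_nonneg (h.coeff (toDual ((d + e) / 2))),
    sq_abs (h.coeff (toDual ((d + e) / 2)))]

end PS

section Metzler

open OrderDual HahnSeries

def entLiftCoeff (c : ℝ) (e : Option (Bool × ℝ)) : ℝ :=
  e.elim 0 (fun p => if p.1 then c else -1)

lemma coeff_liftPt_mul_entLift (c : ℝ) (v : WithBot ℝ) (e : Option (Bool × ℝ)) (E : ℝ) :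
    (liftPt v * entLift c e).coeff (toDual E) =
      if tmod e + v = E then entLiftCoeff c e else 0 := by
  induction v using WithBot.recBotCoe with
  | bot => simp [liftPt]
  | coe r =>
    rcases e with _ | ⟨b, s⟩
    · simp [entLift, tmod]
    have hlift : entLift c (some (b, s)) = single (toDual s) (entLiftCoeff c (some (b, s))) := by
      cases b <;> rfl
    rw [hlift, liftPt, WithBot.recBotCoe_coe, PS.tpow, single_mul_single, one_mul, coeff_single]
    change (if toDual E = toDual (r + s) then _ else 0) = _
    simp only [tmod, Option.elim, ← WithBot.coe_add, WithBot.coe_eq_coe, toDual_inj,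
      add_comm r s, eq_comm]

variable {m n : ℕ} (Q : Fin n → Fin m → Fin m → Option (Bool × ℝ))
  (x : Fin n → WithBot ℝ)

lemma coeff_pencil (i j : Fin m) (E : ℝ) :
    (pencil Q x i j).coeff (toDual E) =
      ∑ k, if tmod (Q k i j) + x k = E then entLiftCoeff ((m : ℝ) * n) (Q k i j) else 0 := by
  simp only [pencil, coeff_sum, coeff_liftPt_mul_entLift]

lemma val_pencil_le {i j : Fin m} {b : WithBot ℝ} (hb : ∀ k, tmod (Q k i j) + x k ≤ b) :
    (pencil Q x i j).val ≤ b :=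
  PS.val_le_iff.mpr fun E hE => by
    rw [coeff_pencil]
    exact Finset.sum_eq_zero fun k _ => if_neg fun hk => (hb k).not_gt (by rwa [hk])

lemma tmod_add_le_dPlus {i : Fin m} (hi : dMinus Q x i ≤ dPlus Q x i) (k : Fin n) :
    tmod (Q k i i) + x k ≤ dPlus Q x i := by
  rcases hq : Q k i i with _ | ⟨_ | _, s⟩
  · simp [tmod]
  all_goals
    rw [← hq]
    have hk {p : Option (Bool × ℝ) → Prop} (hp : p (Q k i i)) :
        k ∈ Finset.univ.filter fun k => p (Q k i i) :=
      Finset.mem_filter.mpr ⟨Finset.mem_univ k, hp⟩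
  · exact (Finset.le_sup (f := fun k => tmod (Q k i i) + x k) (hk ⟨s, hq⟩)).trans hi
  · exact Finset.le_sup (f := fun k => tmod (Q k i i) + x k) (hk ⟨s, hq⟩)

lemma abs_coeff_pencil_le (hmetzler : ∀ k i j, i ≠ j → ¬ isPos (Q k i j)) {i j : Fin m}
    (hij : i ≠ j) (E : ℝ) : |(pencil Q x i j).coeff (toDual E)| ≤ n := by
  have hterm (k : Fin n) :
      |if tmod (Q k i j) + x k = E then entLiftCoeff ((m : ℝ) * n) (Q k i j) else 0| ≤ 1 := by
    split_ifs
    · rcases hq : Q k i j with _ | ⟨_ | _, s⟩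
      · simp [entLiftCoeff]
      · simp [entLiftCoeff]
      · exact absurd ⟨s, hq⟩ (hmetzler k i j hij)
    · simp
  rw [coeff_pencil]
  refine (Finset.abs_sum_le_sum_abs _ _).trans ?_
  simpa using Finset.sum_le_sum fun k (_ : k ∈ Finset.univ) => hterm k

lemma coeff_pencil_diag_ge {i : Fin m} {d : ℝ} (hd : dPlus Q x i = d) :
    ((m : ℝ) - 1) * n + 1 ≤ (pencil Q x i i).coeff (toDual d) := by
  have hne : (Finset.univ.filter fun k => isPos (Q k i i)).Nonempty := by
    rw [Finset.nonempty_iff_ne_empty]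
    intro h
    simp [dPlus, h] at hd
  obtain ⟨k₀, hk₀, hk₀d⟩ := Finset.exists_mem_eq_sup _ hne fun k => tmod (Q k i i) + x k
  obtain ⟨s, hs⟩ := (Finset.mem_filter.mp hk₀).2
  set t : Fin n → ℝ := fun k =>
    if tmod (Q k i i) + x k = d then entLiftCoeff ((m : ℝ) * n) (Q k i i) else 0 with ht
  have hterm (k : Fin n) : 0 ≤ t k + 1 := by
    simp only [ht]
    split_ifs
    · rcases Q k i i with _ | ⟨_ | _, _⟩ <;> simp [entLiftCoeff]
      positivity
    · norm_num
  have hlead : t k₀ = m * n := by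
    simp [ht, ← hd, dPlus, hk₀d, hs, entLiftCoeff]
  have := Finset.single_le_sum (fun k _ => hterm k) (Finset.mem_univ k₀)
  rw [Finset.sum_add_distrib, hlead] at this
  rw [coeff_pencil]
  simp only [Finset.sum_const, Finset.card_univ, Fintype.card_fin, nsmul_eq_mul, mul_one] at this
  linarith

lemma offAbs_comm (hsym : ∀ k i j, Q k i j = Q k j i) (i j : Fin m) :
    offAbs Q x i j = offAbs Q x j i := by
  simp only [offAbs, hsym _ i j]

lemma two_nsmul_offAbs_le (hsym : ∀ k i j, Q k i j = Q k j i) (hx : memTropSpectra Q x)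
    {i j : Fin m} (hij : i ≠ j) : 2 • offAbs Q x i j ≤ dPlus Q x i + dPlus Q x j := by
  rcases hij.lt_or_gt with h | h
  · exact hx.2 i j h
  · rw [offAbs_comm Q x hsym, add_comm]
    exact hx.2 j i h

end Metzler

/-- Let `Q⁽¹⁾, …, Q⁽ⁿ⁾` be symmetric tropical Metzler matrices, and
lift them to Puiseux matrices `Q̲⁽ᵏ⁾` by sending a tropically negative entry `⊖r` to
`-t^r`, a tropically positive entry `r` to `m·n·t^r` and `-∞` to `0`.  Then for every
point `x` of the tropical Metzler spectrahedron `S(Q⁽¹⁾, …, Q⁽ⁿ⁾)`, the monomial lift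
`x̲` (with `x̲_k = t^{x_k}`, `t^{-∞} = 0`) satisfies, for all `i ≠ j`:
`Q̲ᵢᵢ(x̲) ≥ 0` and `Q̲ᵢᵢ(x̲)·Q̲ⱼⱼ(x̲) ≥ (m-1)²·(Q̲ᵢⱼ(x̲))²`. -/
theorem metzler_lift_diagonally_dominant {m n : ℕ}
    (Q : Fin n → Fin m → Fin m → Option (Bool × ℝ))
    (hsym : ∀ k i j, Q k i j = Q k j i)
    (hmetzler : ∀ k i j, i ≠ j → ¬ isPos (Q k i j))
    (x : Fin n → WithBot ℝ) (hx : memTropSpectra Q x) :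
    ∀ i j : Fin m, i ≠ j →
      PS.le 0 (pencil Q x i i) ∧
      PS.le (((m : PS) - 1) ^ 2 * (pencil Q x i j) ^ 2)
        (pencil Q x i i * pencil Q x j j) := by
  intro i j hij
  have hm : (0 : ℝ) ≤ m - 1 := sub_nonneg.mpr (Nat.one_le_cast.mpr i.pos)
  have hdiag (l : Fin m) : (pencil Q x l l).val ≤ dPlus Q x l :=
    val_pencil_le Q x (tmod_add_le_dPlus Q x (hx.1 l))
  have hoff : (pencil Q x i j).val ≤ offAbs Q x i j :=
    val_pencil_le Q x fun k =>
      Finset.le_sup (f := fun k => tmod (Q k i j) + x k) (Finset.mem_univ k)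
  refine ⟨?_, ?_⟩
  · rw [PS.le, sub_zero]
    refine PS.nonneg_of_val_le (hdiag i) fun d hd => ?_
    nlinarith [coeff_pencil_diag_ge Q x hd, Nat.cast_nonneg (α := ℝ) n]
  · have hC : ((m : PS) - 1) ^ 2 * pencil Q x i j ^ 2 =
        (((m : ℝ) - 1) • pencil Q x i j) ^ 2 := by
      rw [← HahnSeries.C_mul_eq_smul, map_sub, map_natCast, map_one, mul_pow]
    rw [hC]
    refine PS.sq_le_mul_of_val_le (hdiag i) (hdiag j) ((PS.val_smul_le _ _).trans hoff)
      (two_nsmul_offAbs_le Q x hsym hx hij) (fun _ => coeff_pencil_diag_ge Q x)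
      (fun _ => coeff_pencil_diag_ge Q x) fun E => ?_
    rw [HahnSeries.coeff_smul, smul_eq_mul, abs_mul, abs_of_nonneg hm]
    exact mul_le_mul_of_nonneg_left (abs_coeff_pencil_le Q x hmetzler hij _) hm
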